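/- The map Ŝ(x₁,x₂,y₁,y₂,z₁,z₂,t₁,t₂) = (x₁x₂y₁/(x₁x₂+y₂z₁), y₂, (x₁x₂+y₂z₁)/x₂, x₂z₂, y₁y₂z₁/(x₁x₂+y₂z₁), 1, t₁x₂/y₂, t₂z₂) satisfies the set-theoretical 4-simplex equation, wherever all denominators are nonzero. -/

import Mathlib

/-- The noninvolutive Hirota-type 4-simplex map `Ŝ`. -/
noncomputable def hirotaShat :
    (ℂ × ℂ) × (ℂ × ℂ) × (ℂ × ℂ) × (ℂ × ℂ) → (ℂ × ℂ) × (ℂ × ℂ) × (ℂ × ℂ) × (ℂ × ℂ) :=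
  fun ((x1, x2), (y1, y2), (z1, z2), (t1, t2)) =>
    ((x1 * x2 * y1 / (x1 * x2 + y2 * z1), y2),
     ((x1 * x2 + y2 * z1) / x2, x2 * z2),
     (y1 * y2 * z1 / (x1 * x2 + y2 * z1), 1),
     (t1 * x2 / y2, t2 * z2))

/-- All denominators occurring in `Ŝ` are nonzero. -/
def hirotaShatOk : (ℂ × ℂ) × (ℂ × ℂ) × (ℂ × ℂ) × (ℂ × ℂ) → Prop :=
  fun ((x1, x2), (y1, y2), (z1, z2), (t1, t2)) =>
    x1 * x2 + y2 * z1 ≠ 0 ∧ x2 ≠ 0 ∧ y2 ≠ 0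

section Lifts
variable {X : Type*} (S : X × X × X × X → X × X × X × X)

/-- `S` acting on factors 1,2,3,4 of a 10-tuple. -/
def lift1234 : X × X × X × X × X × X × X × X × X × X → X × X × X × X × X × X × X × X × X × X :=
  fun (p1, p2, p3, p4, p5, p6, p7, p8, p9, p10) =>
    let q := S (p1, p2, p3, p4)
    (q.1, q.2.1, q.2.2.1, q.2.2.2, p5, p6, p7, p8, p9, p10)

/-- `S` acting on factors 1,5,6,7 of a 10-tuple. -/
def lift1567 : X × X × X × X × X × X × X × X × X × X → X × X × X × X × X × X × X × X × X × X :=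
  fun (p1, p2, p3, p4, p5, p6, p7, p8, p9, p10) =>
    let q := S (p1, p5, p6, p7)
    (q.1, p2, p3, p4, q.2.1, q.2.2.1, q.2.2.2, p8, p9, p10)

/-- `S` acting on factors 2,5,8,9 of a 10-tuple. -/
def lift2589 : X × X × X × X × X × X × X × X × X × X → X × X × X × X × X × X × X × X × X × X :=
  fun (p1, p2, p3, p4, p5, p6, p7, p8, p9, p10) =>
    let q := S (p2, p5, p8, p9)
    (p1, q.1, p3, p4, q.2.1, p6, p7, q.2.2.1, q.2.2.2, p10)

/-- `S` acting on factors 3,6,8,10 of a 10-tuple. -/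
def lift368X : X × X × X × X × X × X × X × X × X × X → X × X × X × X × X × X × X × X × X × X :=
  fun (p1, p2, p3, p4, p5, p6, p7, p8, p9, p10) =>
    let q := S (p3, p6, p8, p10)
    (p1, p2, q.1, p4, p5, q.2.1, p7, q.2.2.1, p9, q.2.2.2)

/-- `S` acting on factors 4,7,9,10 of a 10-tuple. -/
def lift479X : X × X × X × X × X × X × X × X × X × X → X × X × X × X × X × X × X × X × X × X :=
  fun (p1, p2, p3, p4, p5, p6, p7, p8, p9, p10) =>
    let q := S (p4, p7, p9, p10)
    (p1, p2, p3, q.1, p5, p6, q.2.1, p8, q.2.2.1, q.2.2.2)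

end Lifts

section Projs
variable {X : Type*}

/-- Projection on factors 1,2,3,4. -/
def proj1234 : X × X × X × X × X × X × X × X × X × X → X × X × X × X :=
  fun (p1, p2, p3, p4, _, _, _, _, _, _) => (p1, p2, p3, p4)

/-- Projection on factors 1,5,6,7. -/
def proj1567 : X × X × X × X × X × X × X × X × X × X → X × X × X × X :=
  fun (p1, _, _, _, p5, p6, p7, _, _, _) => (p1, p5, p6, p7)

/-- Projection on factors 2,5,8,9. -/
def proj2589 : X × X × X × X × X × X × X × X × X × X → X × X × X × X :=
  fun (_, p2, _, _, p5, _, _, p8, p9, _) => (p2, p5, p8, p9)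

/-- Projection on factors 3,6,8,10. -/
def proj368X : X × X × X × X × X × X × X × X × X × X → X × X × X × X :=
  fun (_, _, p3, _, _, p6, _, p8, _, p10) => (p3, p6, p8, p10)

/-- Projection on factors 4,7,9,10. -/
def proj479X : X × X × X × X × X × X × X × X × X × X → X × X × X × X :=
  fun (_, _, _, p4, _, _, p7, _, p9, p10) => (p4, p7, p9, p10)

end Projs

/-!
Both sides are evaluated in closed form. For the pairs `x, y, z, t, a, b, c, d, e, f` write
`C = t₁t₂ + c₂e₁`, `D = z₁z₂ + b₂d₁`, `E = x₁x₂ + y₂z₁`, `F = x₁x₂z₂ + y₂D`,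
`P = x₁x₂y₁y₂ + a₂b₁E` and `Q = y₁y₂D + a₂b₁b₂d₁`. The denominators met along the left side are
`C, D, Q/D, F/z₂, Pz₂/F`, those along the right side are `E, P/E, F, Q/F, x₂z₂C/y₂`. In these
terms both sides clear to `hirotaShatSimplexValue`; the only cancellation that is not bookkeeping is
`z₁F + x₁x₂b₂d₁ = ED`.
-/

local notation "Pairs10" =>
  (ℂ × ℂ) × (ℂ × ℂ) × (ℂ × ℂ) × (ℂ × ℂ) × (ℂ × ℂ) × (ℂ × ℂ) × (ℂ × ℂ) × (ℂ × ℂ) × (ℂ × ℂ) × (ℂ × ℂ)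

noncomputable def hirotaShatSimplexValue : Pairs10 → Pairs10 :=
  fun ((x1, x2), (y1, y2), (z1, z2), (t1, t2), (a1, a2), (b1, b2), (c1, c2), (d1, d2), (e1, e2),
      (f1, f2)) =>
    let C := t1 * t2 + c2 * e1
    let D := z1 * z2 + b2 * d1
    let E := x1 * x2 + y2 * z1
    let F := x1 * x2 * z2 + y2 * D
    let P := x1 * x2 * y1 * y2 + a2 * b1 * E
    let Q := y1 * y2 * D + a2 * b1 * b2 * d1
    ((x1 * x2 * y1 * y2 * a1 / P, a2), (P * z2 / (F * y2), y2 * b2),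
     (y1 * y2 * a1 * a2 * z1 * b1 * F / (Q * P), 1), (t1 * t2 * c1 * y2 / (C * a2), c2 * b2),
     (F / (x2 * z2), x2 * z2 * d2), (Q / F, 1), (C * x2 / (t2 * y2), t2 * e2 * z2 * d2),
     (a1 * a2 * b1 * b2 * d1 / Q, 1), (c1 * c2 * e1 * y2 / (C * a2), 1),
     (f1 * t2 * z2 / (c2 * b2), f2 * e2 * d2))

theorem hirotaShat_simplex_lhs_eq (p : Pairs10)
    (h2 : hirotaShatOk (proj368X (lift479X hirotaShat p)))
    (h3 : hirotaShatOk (proj2589 (lift368X hirotaShat (lift479X hirotaShat p))))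
    (h4 : hirotaShatOk
      (proj1567 (lift2589 hirotaShat (lift368X hirotaShat (lift479X hirotaShat p))))) :
    lift1234 hirotaShat
        (lift1567 hirotaShat (lift2589 hirotaShat (lift368X hirotaShat (lift479X hirotaShat p))))
      = hirotaShatSimplexValue p := by
  obtain ⟨⟨x1, x2⟩, ⟨y1, y2⟩, ⟨z1, z2⟩, ⟨t1, t2⟩, ⟨a1, a2⟩, ⟨b1, b2⟩, ⟨c1, c2⟩, ⟨d1, d2⟩, ⟨e1, e2⟩,
    ⟨f1, f2⟩⟩ := p
  simp only [hirotaShat, hirotaShatOk, lift1234, lift1567, lift2589, lift368X, lift479X, proj1567,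
    proj2589, proj368X, hirotaShatSimplexValue, mul_one] at h2 h3 h4 ⊢
  obtain ⟨hD, hz2, -⟩ := h2
  obtain ⟨hQ, hy2, -⟩ := h3
  obtain ⟨hF, -, -⟩ := h4
  set E := x1 * x2 + y2 * z1 with hE_def
  set D := z1 * z2 + b2 * d1 with hD_def
  have eQ : y1 * y2 + a2 * (b1 * b2 * d1 / D) = (y1 * y2 * D + a2 * b1 * b2 * d1) / D := by
    field_simp
  have eF : x1 * x2 + y2 * (D / z2) = (x1 * x2 * z2 + y2 * D) / z2 := by
    field_simp
  rw [eQ] at hQ ⊢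
  rw [eF] at hF ⊢
  replace hQ : y1 * y2 * D + a2 * b1 * b2 * d1 ≠ 0 := (div_ne_zero_iff.mp hQ).1
  replace hF : x1 * x2 * z2 + y2 * D ≠ 0 := (div_ne_zero_iff.mp hF).1
  have eP : x1 * x2 * ((y1 * y2 * D + a2 * b1 * b2 * d1) / D / y2) / ((x1 * x2 * z2 + y2 * D) / z2)
        * y2 + a2 * (z1 * z2 * b1 / D)
      = (x1 * x2 * y1 * y2 + a2 * b1 * E) * z2 / (x1 * x2 * z2 + y2 * D) := by
    field_simp
    rw [hE_def, hD_def]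
    ring
  rw [eP]
  ext <;> field_simp

theorem hirotaShat_simplex_rhs_eq (p : Pairs10)
    (h6 : hirotaShatOk (proj1234 p))
    (h7 : hirotaShatOk (proj1567 (lift1234 hirotaShat p)))
    (h8 : hirotaShatOk (proj2589 (lift1567 hirotaShat (lift1234 hirotaShat p)))) :
    lift479X hirotaShat
        (lift368X hirotaShat (lift2589 hirotaShat (lift1567 hirotaShat (lift1234 hirotaShat p))))
      = hirotaShatSimplexValue p := by
  obtain ⟨⟨x1, x2⟩, ⟨y1, y2⟩, ⟨z1, z2⟩, ⟨t1, t2⟩, ⟨a1, a2⟩, ⟨b1, b2⟩, ⟨c1, c2⟩, ⟨d1, d2⟩, ⟨e1, e2⟩,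
    ⟨f1, f2⟩⟩ := p
  simp only [hirotaShat, hirotaShatOk, lift1234, lift1567, lift2589, lift368X, lift479X, proj1234,
    proj1567, proj2589, hirotaShatSimplexValue, mul_one, one_mul, div_one] at h6 h7 h8 ⊢
  obtain ⟨hE, hx2, hy2⟩ := h6
  obtain ⟨hP, -, -⟩ := h7
  obtain ⟨hF, hx2z2, hy2b2⟩ := h8
  have hz2 : z2 ≠ 0 := right_ne_zero_of_mul hx2z2
  have hb2 : b2 ≠ 0 := right_ne_zero_of_mul hy2b2
  set E := x1 * x2 + y2 * z1 with hE_def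
  set D := z1 * z2 + b2 * d1 with hD_def
  have eP : x1 * x2 * y1 / E * y2 + a2 * b1 = (x1 * x2 * y1 * y2 + a2 * b1 * E) / E := by
    field_simp
  have eF : E / x2 * (x2 * z2) + y2 * b2 * d1 = x1 * x2 * z2 + y2 * D := by
    field_simp
    rw [hE_def, hD_def]
    ring
  rw [eP] at hP ⊢
  rw [eF] at hF ⊢
  replace hP : x1 * x2 * y1 * y2 + a2 * b1 * E ≠ 0 := (div_ne_zero_iff.mp hP).1
  have eQ : y1 * y2 * z1 / E + (x1 * x2 * y1 * y2 + a2 * b1 * E) / E / y2 * (y2 * b2) * d1 /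
        (x1 * x2 * z2 + y2 * D)
      = (y1 * y2 * D + a2 * b1 * b2 * d1) / (x1 * x2 * z2 + y2 * D) := by
    field_simp
    rw [hE_def, hD_def]
    ring
  rw [eQ]
  ext <;> field_simp

theorem hirotaShat_four_simplex_general (p : (ℂ × ℂ) × (ℂ × ℂ) × (ℂ × ℂ) × (ℂ × ℂ) × (ℂ × ℂ) × (ℂ × ℂ) × (ℂ × ℂ) × (ℂ × ℂ) × (ℂ × ℂ) × (ℂ × ℂ))
    (h2 : hirotaShatOk (proj368X (lift479X hirotaShat p)))
    (h3 : hirotaShatOk (proj2589 (lift368X hirotaShat (lift479X hirotaShat p))))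
    (h4 : hirotaShatOk (proj1567 (lift2589 hirotaShat (lift368X hirotaShat (lift479X hirotaShat p)))))
    (h6 : hirotaShatOk (proj1234 p))
    (h7 : hirotaShatOk (proj1567 (lift1234 hirotaShat p)))
    (h8 : hirotaShatOk (proj2589 (lift1567 hirotaShat (lift1234 hirotaShat p)))) :
    lift1234 hirotaShat (lift1567 hirotaShat (lift2589 hirotaShat (lift368X hirotaShat (lift479X hirotaShat p))))
      = lift479X hirotaShat (lift368X hirotaShat (lift2589 hirotaShat (lift1567 hirotaShat (lift1234 hirotaShat p)))) :=
  (hirotaShat_simplex_lhs_eq p h2 h3 h4).trans (hirotaShat_simplex_rhs_eq p h6 h7 h8).symm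

/-- `Ŝ` satisfies the set-theoretical 4-simplex equation,
wherever all denominators are nonzero. -/
theorem hirotaShat_four_simplex (p : (ℂ × ℂ) × (ℂ × ℂ) × (ℂ × ℂ) × (ℂ × ℂ) × (ℂ × ℂ) × (ℂ × ℂ) × (ℂ × ℂ) × (ℂ × ℂ) × (ℂ × ℂ) × (ℂ × ℂ))
    (h1 : hirotaShatOk (proj479X p))
    (h2 : hirotaShatOk (proj368X (lift479X hirotaShat p)))
    (h3 : hirotaShatOk (proj2589 (lift368X hirotaShat (lift479X hirotaShat p))))
    (h4 : hirotaShatOk (proj1567 (lift2589 hirotaShat (lift368X hirotaShat (lift479X hirotaShat p)))))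
    (h5 : hirotaShatOk (proj1234 (lift1567 hirotaShat (lift2589 hirotaShat (lift368X hirotaShat (lift479X hirotaShat p))))))
    (h6 : hirotaShatOk (proj1234 p))
    (h7 : hirotaShatOk (proj1567 (lift1234 hirotaShat p)))
    (h8 : hirotaShatOk (proj2589 (lift1567 hirotaShat (lift1234 hirotaShat p))))
    (h9 : hirotaShatOk (proj368X (lift2589 hirotaShat (lift1567 hirotaShat (lift1234 hirotaShat p)))))
    (h10 : hirotaShatOk (proj479X (lift368X hirotaShat (lift2589 hirotaShat (lift1567 hirotaShat (lift1234 hirotaShat p)))))) :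
    lift1234 hirotaShat (lift1567 hirotaShat (lift2589 hirotaShat (lift368X hirotaShat (lift479X hirotaShat p))))
      = lift479X hirotaShat (lift368X hirotaShat (lift2589 hirotaShat (lift1567 hirotaShat (lift1234 hirotaShat p)))) :=
  hirotaShat_four_simplex_general p h2 h3 h4 h6 h7 h8
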